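/- Let F̄(x) = (1/2)‖Āx − b̄‖² + τ‖x‖₁ with τ > 0 and F̄* = min F̄. For any x^k ∈ ℝⁿ define F̄_low1(x^k) = F̄(x^k) − ⟨Āᵀ(Āx^k − b̄), x^k⟩ − τ‖x^k‖₁ + min(1 − ‖Āᵀ(Āx^k − b̄)‖_∞/τ, 0)·F̄(x^k). Then F̄* ≥ F̄_low1(x^k). -/
import Mathlib


open Matrix

/-- `F̄(x) = (1/2)‖Āx − b̄‖² + τ‖x‖₁`. -/
noncomputable def lsObj {m n : ℕ} (Ab : Matrix (Fin m) (Fin n) ℝ) (bb : Fin m → ℝ)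
    (τ : ℝ) (x : Fin n → ℝ) : ℝ :=
  (1 / 2) * ((Ab.mulVec x - bb) ⬝ᵥ (Ab.mulVec x - bb)) + τ * ∑ i, |x i|

/-- `∇((1/2)‖Āx − b̄‖²) = Āᵀ(Āx − b̄)`. -/
noncomputable def lsGrad {m n : ℕ} (Ab : Matrix (Fin m) (Fin n) ℝ) (bb : Fin m → ℝ)
    (x : Fin n → ℝ) : Fin n → ℝ :=
  Abᵀ.mulVec (Ab.mulVec x - bb)

/-- The lower bound `F̄_low1(x)`. -/
noncomputable def lsLow1 {m n : ℕ} (Ab : Matrix (Fin m) (Fin n) ℝ) (bb : Fin m → ℝ)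
    (τ : ℝ) (x : Fin n → ℝ) : ℝ :=
  lsObj Ab bb τ x - lsGrad Ab bb x ⬝ᵥ x - τ * ∑ i, |x i| +
    min (1 - (⨆ i, |lsGrad Ab bb x i|) / τ) 0 * lsObj Ab bb τ x

/-- `F̄* ≥ F̄_low1(x^k)` for every `x^k`. -/
theorem stmt13 {m n : ℕ} (Ab : Matrix (Fin m) (Fin n) ℝ) (bb : Fin m → ℝ) (τ : ℝ)
    (hτ : 0 < τ) (xstar : Fin n → ℝ)
    (hopt : ∀ y, lsObj Ab bb τ xstar ≤ lsObj Ab bb τ y) :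
    ∀ xk : Fin n → ℝ, lsObj Ab bb τ xstar ≥ lsLow1 Ab bb τ xk := by
  intro xk
  set G := lsGrad Ab bb xk with hG
  set S := ⨆ i, |G i| with hS
  have hquad : ∀ {k : ℕ} (u : Fin k → ℝ), 0 ≤ u ⬝ᵥ u := fun u =>
    Finset.sum_nonneg fun i _ => mul_self_nonneg _
  have hNnonneg : ∀ x : Fin n → ℝ, (0:ℝ) ≤ ∑ i, |x i| := fun x =>
    Finset.sum_nonneg fun i _ => abs_nonneg _
  have hle : ∀ i, |G i| ≤ S := fun i =>
    le_ciSup (f := fun j => |G j|) (Set.Finite.bddAbove (Set.finite_range _)) i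
  have hSnonneg : 0 ≤ S := by
    rcases isEmpty_or_nonempty (Fin n) with h | h
    · simp [hS]
    · exact le_trans (abs_nonneg _) (hle h.some)
  have hdot : ∀ x : Fin n → ℝ, -(S * ∑ i, |x i|) ≤ G ⬝ᵥ x := by
    intro x
    have h1 : -(S * ∑ i, |x i|) = ∑ i, -(S * |x i|) := by
      rw [Finset.mul_sum, ← Finset.sum_neg_distrib]
    rw [h1]
    refine Finset.sum_le_sum fun i _ => ?_
    have h2 : |G i * x i| ≤ S * |x i| := by
      rw [abs_mul]; exact mul_le_mul_of_nonneg_right (hle i) (abs_nonneg _)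
    nlinarith [neg_abs_le (G i * x i)]
  -- convexity of quadratic part
  set r := Ab.mulVec xstar - bb with hr
  set s := Ab.mulVec xk - bb with hs
  have hGd : G ⬝ᵥ (xstar - xk) = s ⬝ᵥ (r - s) := by
    rw [hG]
    unfold lsGrad
    rw [← hs, Matrix.mulVec_transpose, ← Matrix.dotProduct_mulVec]
    congr 1
    rw [Matrix.mulVec_sub]
    simp [hr, hs]
  have hconv : (1/2) * (s ⬝ᵥ s) + G ⬝ᵥ (xstar - xk) ≤ (1/2) * (r ⬝ᵥ r) := by
    rw [hGd]
    have h0 := hquad (r - s)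
    have hx : (r - s) ⬝ᵥ (r - s) = r ⬝ᵥ r - 2 * (s ⬝ᵥ r) + s ⬝ᵥ s := by
      simp only [dotProduct, Pi.sub_apply]
      rw [Finset.mul_sum, ← Finset.sum_sub_distrib, ← Finset.sum_add_distrib]
      exact Finset.sum_congr rfl fun i _ => by ring
    have hy : s ⬝ᵥ (r - s) = s ⬝ᵥ r - s ⬝ᵥ s := by rw [dotProduct_sub]
    linarith
  have hFk : τ * ∑ i, |xstar i| ≤ lsObj Ab bb τ xk := by
    refine le_trans ?_ (hopt xk)
    unfold lsObj
    have := hquad r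
    rw [← hr]
    linarith
  have hFknn : 0 ≤ lsObj Ab bb τ xk :=
    le_trans (by positivity) hFk
  -- key bound: G ⬝ᵥ xstar + τ ‖xstar‖₁ ≥ min (1 - S/τ) 0 * F(xk)
  have hkey : min (1 - S / τ) 0 * lsObj Ab bb τ xk ≤ G ⬝ᵥ xstar + τ * ∑ i, |xstar i| := by
    have h1 : (τ - S) * ∑ i, |xstar i| ≤ G ⬝ᵥ xstar + τ * ∑ i, |xstar i| := by
      have := hdot xstar
      nlinarith
    refine le_trans ?_ h1
    rcases le_or_gt S τ with hc | hc
    · have hmin : min (1 - S / τ) 0 = 0 := min_eq_right (by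
        rw [sub_nonneg, div_le_one hτ]; exact hc)
      rw [hmin, zero_mul]
      exact mul_nonneg (by linarith) (hNnonneg _)
    · have hmin : min (1 - S / τ) 0 = 1 - S / τ := min_eq_left (by
        rw [sub_nonpos, le_div_iff₀ hτ, one_mul]; exact le_of_lt hc)
      rw [hmin]
      have h2 : (1 - S / τ) * lsObj Ab bb τ xk = (τ - S) * (lsObj Ab bb τ xk / τ) := by
        field_simp
      rw [h2]
      have h3 : ∑ i, |xstar i| ≤ lsObj Ab bb τ xk / τ := by
        rw [le_div_iff₀ hτ]; linarith [hFk]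
      have h4 : τ - S < 0 := by linarith
      nlinarith
  -- assemble
  unfold lsLow1 lsObj
  rw [← hr, ← hs, ← hG, ← hS]
  have hGsub : G ⬝ᵥ (xstar - xk) = G ⬝ᵥ xstar - G ⬝ᵥ xk := dotProduct_sub _ _ _
  have hFkeq : lsObj Ab bb τ xk = (1/2) * (s ⬝ᵥ s) + τ * ∑ i, |xk i| := by
    unfold lsObj; rw [← hs]
  rw [show min (1 - S / τ) 0 * ((1:ℝ)/2 * (s ⬝ᵥ s) + τ * ∑ i, |xk i|)
      = min (1 - S / τ) 0 * lsObj Ab bb τ xk from by rw [hFkeq]]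
  linarith [hkey, hconv, hGsub.symm.le, hGsub.le]
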